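/- Rate–MSE equivalence: let H ∈ ℂ^{N_R×N_R} and N ∈ ℂ^{N_R×N_R} Hermitian positive definite, and let U* = I - H^H(HH^H + N)^{-1}H be the MMSE matrix. Then U* is Hermitian positive definite and log₂ det(I + H H^H N^{-1}) = -log₂ det(U*). -/

import Mathlib

/-! By the Woodbury identity the MMSE matrix `1 - Hᴴ (H Hᴴ + N)⁻¹ H` is the inverse of
`1 + Hᴴ N⁻¹ H`, which is positive definite; by Sylvester's determinant identity
`det (1 + H Hᴴ N⁻¹) = det (1 + Hᴴ N⁻¹ H)`, so the two log-determinants differ only in sign. -/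

open scoped Matrix ComplexOrder

namespace Matrix

variable {m n α : Type*} [Fintype m] [Fintype n] [DecidableEq m] [DecidableEq n]

theorem one_sub_mul_inv_add_mul_eq_inv [CommRing α] (G : Matrix n m α) (H : Matrix m n α)
    (N : Matrix m m α) (hN : IsUnit N) (hHGN : IsUnit (H * G + N)) :
    1 - G * (H * G + N)⁻¹ * H = (1 + G * N⁻¹ * H)⁻¹ := by
  have hN_inv_inv : N⁻¹⁻¹ = N := nonsing_inv_nonsing_inv N ((isUnit_iff_isUnit_det N).1 hN)
  rw [add_mul_mul_inv_eq_sub 1 G N⁻¹ H isUnit_one (isUnit_nonsing_inv_iff.2 hN)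
    (by rwa [hN_inv_inv, inv_one, Matrix.mul_one, add_comm]), hN_inv_inv]
  simp only [inv_one, Matrix.one_mul, Matrix.mul_one, add_comm N]

theorem PosDef.one_add_conjTranspose_mul_inv_mul {K : Type*} [Field K] [PartialOrder K]
    [StarRing K] [StarOrderedRing K] {N : Matrix m m K} (hN : N.PosDef) (H : Matrix m n K) :
    (1 + Hᴴ * N⁻¹ * H).PosDef :=
  PosDef.one.add_posSemidef (hN.inv.posSemidef.conjTranspose_mul_mul_same H)

end Matrix

theorem Complex.inv_re_of_pos {z : ℂ} (hz : 0 < z) : z⁻¹.re = z.re⁻¹ := by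
  obtain ⟨r, -, rfl⟩ := RCLike.pos_iff_exists_ofReal.1 hz
  simp

open Matrix in
theorem rate_mse_equivalence
    {NR : ℕ} (H N : Matrix (Fin NR) (Fin NR) ℂ) (hN : N.PosDef) :
    (1 - Hᴴ * (H * Hᴴ + N)⁻¹ * H : Matrix (Fin NR) (Fin NR) ℂ).PosDef ∧
    Real.logb 2 ((1 + H * Hᴴ * N⁻¹ : Matrix (Fin NR) (Fin NR) ℂ).det.re)
      = - Real.logb 2 ((1 - Hᴴ * (H * Hᴴ + N)⁻¹ * H : Matrix (Fin NR) (Fin NR) ℂ).det.re) := by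
  have hHHN : (H * Hᴴ + N).PosDef := hN.posSemidef_add (posSemidef_self_mul_conjTranspose H)
  have hB := hN.one_add_conjTranspose_mul_inv_mul H
  have hU : 1 - Hᴴ * (H * Hᴴ + N)⁻¹ * H = (1 + Hᴴ * N⁻¹ * H)⁻¹ :=
    one_sub_mul_inv_add_mul_eq_inv Hᴴ H N hN.isUnit hHHN.isUnit
  have hdet : (1 + H * Hᴴ * N⁻¹).det = (1 + Hᴴ * N⁻¹ * H).det := by
    rw [Matrix.mul_assoc, det_one_add_mul_comm, Matrix.mul_assoc]
  refine ⟨hU ▸ hB.inv, ?_⟩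
  rw [hU, det_nonsing_inv, Ring.inverse_eq_inv, Complex.inv_re_of_pos hB.det_pos, Real.logb_inv,
    neg_neg, hdet]
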